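/- For n ≥ 1 and g ≥ 0, the Lehman-Walsh sum over partitions equals the odd-cycle permutation count: ∑_{λ⊢g} (n+1)_{2g+ℓ(λ)} / (∏_i c_i!(2i+1)^{c_i}) = O(n+1,g), where (n+1)_{2g+ℓ(λ)} = (n+1)n⋯(n+2-2g-ℓ(λ)). -/

import Mathlib

set_option maxHeartbeats 1000000


open Finset Polynomial

/-- Number of cycles (including fixed points) of a permutation of a finite type. -/
def cycleCount {α : Type*} [Fintype α] [DecidableEq α] (σ : Equiv.Perm α) : ℕ :=
  Multiset.card σ.cycleType + (Fintype.card α - σ.cycleType.sum)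

/-- Unsigned Stirling number of the first kind: the number of permutations of an
`m`-element set with exactly `i` cycles. -/
noncomputable def stirC (m i : ℕ) : ℕ :=
  Nat.card {σ : Equiv.Perm (Fin m) // cycleCount σ = i}

/-- `O(m, g)`: the number of permutations of an `m`-element set all of whose cycles
are odd and which have exactly `m - 2g` cycles. -/
noncomputable def oddCyclePermCount (m : ℕ) (g : ℤ) : ℕ :=
  Nat.card {σ : Equiv.Perm (Fin m) //
    (∀ l ∈ σ.cycleType, Odd l) ∧ (cycleCount σ : ℤ) = (m : ℤ) - 2 * g}



open Finset

noncomputable section LWaux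

/-- weight of a partition-multiset -/
def wq (s : Multiset ℕ) : ℚ :=
  ∏ i ∈ s.toFinset, (((s.count i).factorial * (2 * i + 1) ^ (s.count i) : ℕ) : ℚ)

lemma wq_pos (s : Multiset ℕ) : 0 < wq s := by
  refine Finset.prod_pos fun i _ => ?_
  have : 0 < (s.count i).factorial * (2 * i + 1) ^ (s.count i) := by positivity
  exact_mod_cast this

lemma wq_ne_zero (s : Multiset ℕ) : wq s ≠ 0 := (wq_pos s).ne'

lemma wq_cons (j : ℕ) (s : Multiset ℕ) :
    wq (j ::ₘ s) = wq s * (((s.count j + 1) * (2 * j + 1) : ℕ) : ℚ) := by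
  classical
  set f : Multiset ℕ → ℕ → ℚ :=
    fun t i => (((t.count i).factorial * (2 * i + 1) ^ (t.count i) : ℕ) : ℚ) with hf
  have h1 : wq (j ::ₘ s) = ∏ i ∈ insert j s.toFinset, f (j ::ₘ s) i := by
    rw [wq, Multiset.toFinset_cons]
  have h2 : wq s = ∏ i ∈ insert j s.toFinset, f s i := by
    rw [wq]
    exact (Finset.prod_insert_of_eq_one_if_notMem (fun hj => by
      simp [hf, Multiset.count_eq_zero_of_notMem (fun h => hj (Multiset.mem_toFinset.2 h))])).symm
  have key : ∀ i ∈ insert j s.toFinset,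
      f (j ::ₘ s) i = f s i * (if i = j then (((s.count j + 1) * (2 * j + 1) : ℕ) : ℚ) else 1) := by
    intro i _
    by_cases hij : i = j
    · subst hij
      rw [if_pos rfl, hf]
      simp only
      rw [Multiset.count_cons_self]
      rw [← Nat.cast_mul]
      congr 1
      rw [Nat.factorial_succ, pow_succ]
      ring
    · simp [hf, Multiset.count_cons_of_ne hij, hij]
  rw [h1, Finset.prod_congr rfl key, Finset.prod_mul_distrib, ← h2,
    Finset.prod_ite_eq' (insert j s.toFinset) j
      (fun _ => (((s.count j + 1) * (2 * j + 1) : ℕ) : ℚ)),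
    if_pos (Finset.mem_insert_self j _)]

/-- multisets of parts of partitions of `G` -/
def PF (G : ℕ) : Finset (Multiset ℕ) := Finset.univ.image (fun p : Nat.Partition G => p.parts)

lemma mem_PF {G : ℕ} {s : Multiset ℕ} : s ∈ PF G ↔ (∀ i ∈ s, 0 < i) ∧ s.sum = G := by
  constructor
  · rintro hs
    obtain ⟨p, -, rfl⟩ := Finset.mem_image.1 hs
    exact ⟨fun i hi => p.parts_pos hi, p.parts_sum⟩
  · rintro ⟨h1, h2⟩
    exact Finset.mem_image.2 ⟨⟨s, fun {i} hi => h1 i hi, h2⟩, Finset.mem_univ _, rfl⟩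

lemma sum_partition (G : ℕ) (h : Multiset ℕ → ℚ) :
    ∑ p : Nat.Partition G, h p.parts = ∑ s ∈ PF G, h s := by
  rw [PF, Finset.sum_image (fun p _ q _ hpq => Nat.Partition.ext hpq)]

private def fwdP (x : Σ _ : Multiset ℕ, ℕ) : Σ _ : Multiset ℕ, ℕ :=
  if x.2 = 1 then ⟨x.1.erase 1, 0⟩ else ⟨(x.2 - 1) ::ₘ x.1.erase x.2, x.2 - 1⟩

private def bwdP (y : Σ _ : Multiset ℕ, ℕ) : Σ _ : Multiset ℕ, ℕ :=
  if y.2 = 0 then ⟨1 ::ₘ y.1, 1⟩ else ⟨(y.2 + 1) ::ₘ y.1.erase y.2, y.2 + 1⟩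

private lemma fwdP_one (s : Multiset ℕ) : fwdP ⟨s, 1⟩ = ⟨s.erase 1, 0⟩ := by
  simp [fwdP]

private lemma fwdP_ne (s : Multiset ℕ) {j : ℕ} (h : j ≠ 1) :
    fwdP ⟨s, j⟩ = ⟨(j - 1) ::ₘ s.erase j, j - 1⟩ := by
  simp [fwdP, h]

private lemma bwdP_zero (s : Multiset ℕ) : bwdP ⟨s, 0⟩ = ⟨1 ::ₘ s, 1⟩ := by
  simp [bwdP]

private lemma bwdP_ne (s : Multiset ℕ) {j : ℕ} (h : j ≠ 0) :
    bwdP ⟨s, j⟩ = ⟨(j + 1) ::ₘ s.erase j, j + 1⟩ := by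
  simp [bwdP, h]

private lemma sig_eq {a c : Multiset ℕ} {b d : ℕ} (h1 : a = c) (h2 : b = d) :
    (⟨a, b⟩ : Σ _ : Multiset ℕ, ℕ) = ⟨c, d⟩ := by
  subst h1; subst h2; rfl

lemma split_lemma (G : ℕ) (Φ : Multiset ℕ → ℚ) :
    ∑ s ∈ PF (G + 1), ∑ j ∈ s.toFinset, Φ (s.erase j)
      = ∑ s ∈ PF G, Φ s + ∑ s ∈ PF G, ∑ j ∈ s.toFinset, Φ (s.erase j) := by
  classical
  have hrhs : ∑ s ∈ PF G, Φ s + ∑ s ∈ PF G, ∑ j ∈ s.toFinset, Φ (s.erase j)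
      = ∑ s ∈ PF G, ∑ j ∈ insert 0 s.toFinset,
          (if j = 0 then Φ s else Φ (s.erase j)) := by
    rw [← Finset.sum_add_distrib]
    refine Finset.sum_congr rfl fun s hs => ?_
    have h0 : (0 : ℕ) ∉ s.toFinset := by
      intro h
      exact absurd ((mem_PF.1 hs).1 0 (Multiset.mem_toFinset.1 h)) (lt_irrefl 0)
    rw [Finset.sum_insert h0, if_pos rfl]
    congr 1
    refine Finset.sum_congr rfl fun j hj => ?_
    have : j ≠ 0 := by
      intro h; subst h; exact h0 hj
    rw [if_neg this]
  rw [hrhs, Finset.sum_sigma' (PF (G+1)) (fun s => s.toFinset) (fun s j => Φ (s.erase j)),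
    Finset.sum_sigma' (PF G) (fun s => insert 0 s.toFinset)
      (fun s j => if j = 0 then Φ s else Φ (s.erase j))]
  refine Finset.sum_nbij' fwdP bwdP ?_ ?_ ?_ ?_ ?_
  · rintro ⟨s, j⟩ hx
    obtain ⟨hs, hj⟩ := Finset.mem_sigma.1 hx
    have hjs : j ∈ s := Multiset.mem_toFinset.1 hj
    obtain ⟨hpos', hsum'⟩ := mem_PF.1 hs
    have hpos : ∀ i ∈ s, 0 < i := hpos'
    have hsum : s.sum = G + 1 := hsum'
    have hj1 : 1 ≤ j := hpos j hjs
    have herased : j + (s.erase j).sum = G + 1 := by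
      rw [← Multiset.sum_cons, Multiset.cons_erase hjs]; exact hsum
    by_cases h1 : j = 1
    · subst h1
      rw [fwdP_one]
      have hA : ∀ i ∈ s.erase 1, 0 < i := fun i hi => hpos i (Multiset.mem_of_mem_erase hi)
      have hB : (s.erase 1).sum = G := by omega
      exact Finset.mem_sigma.2 ⟨mem_PF.2 ⟨hA, hB⟩, Finset.mem_insert_self _ _⟩
    · rw [fwdP_ne _ h1]
      have hA : ∀ i ∈ (j - 1) ::ₘ s.erase j, 0 < i := by
        intro i hi
        rcases Multiset.mem_cons.1 hi with h | h
        · omega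
        · exact hpos i (Multiset.mem_of_mem_erase h)
      have hB : ((j - 1) ::ₘ s.erase j).sum = G := by
        rw [Multiset.sum_cons]; omega
      have hC : j - 1 ∈ insert 0 ((j - 1) ::ₘ s.erase j).toFinset :=
        Finset.mem_insert_of_mem (Multiset.mem_toFinset.2 (Multiset.mem_cons_self _ _))
      exact Finset.mem_sigma.2 ⟨mem_PF.2 ⟨hA, hB⟩, hC⟩
  · rintro ⟨t, j⟩ hy
    obtain ⟨ht, hj'⟩ := Finset.mem_sigma.1 hy
    have hj : j ∈ insert 0 t.toFinset := hj'
    obtain ⟨hpos', hsum'⟩ := mem_PF.1 ht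
    have hpos : ∀ i ∈ t, 0 < i := hpos'
    have hsum : t.sum = G := hsum'
    by_cases h0 : j = 0
    · subst h0
      rw [bwdP_zero]
      have hA : ∀ i ∈ (1 : ℕ) ::ₘ t, 0 < i := by
        intro i hi
        rcases Multiset.mem_cons.1 hi with h | h
        · omega
        · exact hpos i h
      have hB : ((1 : ℕ) ::ₘ t).sum = G + 1 := by
        rw [Multiset.sum_cons]; omega
      have hC : (1 : ℕ) ∈ ((1 : ℕ) ::ₘ t).toFinset :=
        Multiset.mem_toFinset.2 (Multiset.mem_cons_self _ _)
      exact Finset.mem_sigma.2 ⟨mem_PF.2 ⟨hA, hB⟩, hC⟩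
    · rw [bwdP_ne _ h0]
      have hjt : j ∈ t := Multiset.mem_toFinset.1 ((Finset.mem_insert.1 hj).resolve_left h0)
      have herased : j + (t.erase j).sum = G := by
        rw [← Multiset.sum_cons, Multiset.cons_erase hjt]; exact hsum
      have hA : ∀ i ∈ (j + 1) ::ₘ t.erase j, 0 < i := by
        intro i hi
        rcases Multiset.mem_cons.1 hi with h | h
        · omega
        · exact hpos i (Multiset.mem_of_mem_erase h)
      have hB : ((j + 1) ::ₘ t.erase j).sum = G + 1 := by
        rw [Multiset.sum_cons]; omega
      have hC : j + 1 ∈ ((j + 1) ::ₘ t.erase j).toFinset :=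
        Multiset.mem_toFinset.2 (Multiset.mem_cons_self _ _)
      exact Finset.mem_sigma.2 ⟨mem_PF.2 ⟨hA, hB⟩, hC⟩
  · rintro ⟨s, j⟩ hx
    obtain ⟨hs, hj⟩ := Finset.mem_sigma.1 hx
    have hjs : j ∈ s := Multiset.mem_toFinset.1 hj
    have hj1 : 1 ≤ j := (mem_PF.1 hs).1 j hjs
    by_cases h1 : j = 1
    · subst h1
      rw [fwdP_one, bwdP_zero]
      exact sig_eq (Multiset.cons_erase hjs) rfl
    · rw [fwdP_ne _ h1, bwdP_ne _ (by omega : j - 1 ≠ 0), Multiset.erase_cons_head]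
      have hj' : j - 1 + 1 = j := by omega
      rw [hj']
      exact sig_eq (Multiset.cons_erase hjs) rfl
  · rintro ⟨t, j⟩ hy
    obtain ⟨ht, hj'⟩ := Finset.mem_sigma.1 hy
    have hj : j ∈ insert 0 t.toFinset := hj'
    by_cases h0 : j = 0
    · subst h0
      rw [bwdP_zero, fwdP_one, Multiset.erase_cons_head]
    · have hjt : j ∈ t := Multiset.mem_toFinset.1 ((Finset.mem_insert.1 hj).resolve_left h0)
      rw [bwdP_ne _ h0, fwdP_ne _ (by omega : j + 1 ≠ 1), Nat.add_sub_cancel,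
        Multiset.erase_cons_head]
      exact sig_eq (Multiset.cons_erase hjt) rfl
  · rintro ⟨s, j⟩ hx
    obtain ⟨hs, hj⟩ := Finset.mem_sigma.1 hx
    have hjs : j ∈ s := Multiset.mem_toFinset.1 hj
    have hj1 : 1 ≤ j := (mem_PF.1 hs).1 j hjs
    by_cases h1 : j = 1
    · subst h1
      rw [fwdP_one]
      simp
    · rw [fwdP_ne _ h1]
      dsimp only
      rw [if_neg (by omega : ¬ (j - 1 = 0)), Multiset.erase_cons_head]

lemma map_twoadd_sum (s : Multiset ℕ) :
    (Multiset.map (fun i => 2 * i + 1) s).sum = 2 * s.sum + Multiset.card s := by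
  induction s using Multiset.induction_on with
  | empty => simp
  | cons a t ih =>
    simp only [Multiset.map_cons, Multiset.sum_cons, Multiset.card_cons, ih]
    ring

lemma count_sum_eq (s : Multiset ℕ) :
    ∑ j ∈ s.toFinset, s.count j * (2 * j + 1) = 2 * s.sum + Multiset.card s := by
  have h1 : (Multiset.map (fun i => 2 * i + 1) s).sum
      = ∑ j ∈ s.toFinset, s.count j • (2 * j + 1) :=
    Finset.sum_multiset_map_count s _
  simp only [smul_eq_mul] at h1
  rw [← h1, map_twoadd_sum]

lemma LW_inner_sum (s : Multiset ℕ) (c : ℚ) :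
    ∑ j ∈ s.toFinset, c / wq (s.erase j)
      = ((2 * s.sum + Multiset.card s : ℕ) : ℚ) * c / wq s := by
  have key : ∀ j ∈ s.toFinset, c / wq (s.erase j)
      = ((s.count j * (2 * j + 1) : ℕ) : ℚ) * c / wq s := by
    intro j hj
    have hjs : j ∈ s := Multiset.mem_toFinset.1 hj
    have hw : wq s = wq (s.erase j) * ((s.count j * (2 * j + 1) : ℕ) : ℚ) := by
      have h := wq_cons j (s.erase j)
      rw [Multiset.cons_erase hjs] at h
      have hc1 : 1 ≤ s.count j := Multiset.one_le_count_iff_mem.2 hjs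
      have hc2 : s.count j - 1 + 1 = s.count j := by omega
      rw [Multiset.count_erase_self, hc2] at h
      exact h
    have hcnt : ((s.count j * (2 * j + 1) : ℕ) : ℚ) ≠ 0 := by
      have h1 : 0 < s.count j := Multiset.count_pos.2 hjs
      have : 0 < s.count j * (2 * j + 1) := by positivity
      exact_mod_cast this.ne'
    have hwe : wq (s.erase j) ≠ 0 := wq_ne_zero _
    rw [hw, mul_comm (wq (s.erase j)), mul_div_mul_left _ _ hcnt]
  rw [Finset.sum_congr rfl key, ← Finset.sum_div, ← Finset.sum_mul, ← Nat.cast_sum,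
    count_sum_eq]

lemma dF_succ_q (N k : ℕ) :
    ((N.descFactorial (k + 1) : ℕ) : ℚ) = ((N : ℚ) - k) * N.descFactorial k := by
  rcases le_or_gt k N with h | h
  · rw [Nat.descFactorial_succ]
    push_cast [Nat.cast_sub h]
    ring
  · rw [Nat.descFactorial_eq_zero_iff_lt.2 (by omega),
      Nat.descFactorial_eq_zero_iff_lt.2 h]
    simp

lemma dF_split (N k : ℕ) :
    (((N + 1).descFactorial (k + 1) : ℕ) : ℚ)
      = N.descFactorial (k + 1) + ((k + 1 : ℕ) : ℚ) * N.descFactorial k := by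
  rw [Nat.succ_descFactorial_succ, dF_succ_q]
  push_cast
  ring

/-- The Lehman–Walsh partition sum. -/
def Fq (N G : ℕ) : ℚ :=
  ∑ s ∈ PF G, ((N.descFactorial (2 * G + Multiset.card s) : ℕ) : ℚ) / wq s

lemma PF_zero : PF 0 = {0} := by
  ext s
  rw [mem_PF, Finset.mem_singleton]
  constructor
  · rintro ⟨hpos, hsum⟩
    by_contra h
    obtain ⟨a, ha⟩ := Multiset.exists_mem_of_ne_zero h
    have h1 : 0 < a := hpos a ha
    have h2 : a ≤ s.sum := Multiset.single_le_sum (fun x _ => Nat.zero_le x) a ha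
    omega
  · rintro rfl
    simp

lemma Fq_zero (N : ℕ) : Fq N 0 = 1 := by
  rw [Fq, PF_zero]
  simp [wq]

lemma Fq_small (N G : ℕ) (h : N < 2 * (G + 1)) : Fq N (G + 1) = 0 := by
  rw [Fq]
  refine Finset.sum_eq_zero fun s hs => ?_
  rw [Nat.descFactorial_eq_zero_iff_lt.2 (by omega)]
  simp

end LWaux

lemma Fq_rec (m g : ℕ) :
    Fq (m + 2) (g + 1) = Fq (m + 1) (g + 1) + (((m + 1) * m : ℕ) : ℚ) * Fq m g := by
  classical
  set Φ : Multiset ℕ → ℚ :=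
    fun t => (((m + 1).descFactorial (2 * g + 2 + Multiset.card t) : ℕ) : ℚ) / wq t with hΦ
  -- inner sum evaluation, at both levels
  have hinner : ∀ (s : Multiset ℕ), s ∈ PF (g + 1) ∨ s ∈ PF g →
      ∑ j ∈ s.toFinset, Φ (s.erase j)
        = ((2 * s.sum + Multiset.card s : ℕ) : ℚ)
            * (((m + 1).descFactorial (2 * g + 1 + Multiset.card s) : ℕ) : ℚ) / wq s := by
    intro s _
    have key : ∀ j ∈ s.toFinset, Φ (s.erase j)
        = (((m + 1).descFactorial (2 * g + 1 + Multiset.card s) : ℕ) : ℚ) / wq (s.erase j) := by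
      intro j hj
      have hjs : j ∈ s := Multiset.mem_toFinset.1 hj
      have hcard : 1 ≤ Multiset.card s := by
        have := Multiset.card_pos_iff_exists_mem.2 ⟨j, hjs⟩
        omega
      have hc : Multiset.card (s.erase j) = Multiset.card s - 1 :=
        Multiset.card_erase_of_mem hjs
      have h1 : 2 * g + 2 + Multiset.card (s.erase j) = 2 * g + 1 + Multiset.card s := by
        rw [hc]; omega
      rw [hΦ]
      simp only
      rw [h1]
    rw [Finset.sum_congr rfl key, LW_inner_sum]
  -- step 1 : expand the descFactorial
  have step1 : Fq (m + 2) (g + 1)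
      = Fq (m + 1) (g + 1) + ∑ s ∈ PF (g + 1),
          ((2 * (g + 1) + Multiset.card s : ℕ) : ℚ)
            * (((m + 1).descFactorial (2 * g + 1 + Multiset.card s) : ℕ) : ℚ) / wq s := by
    rw [Fq, Fq, ← Finset.sum_add_distrib]
    refine Finset.sum_congr rfl fun s _ => ?_
    have hk : 2 * (g + 1) + Multiset.card s = (2 * g + 1 + Multiset.card s) + 1 := by omega
    rw [hk, dF_split (m + 1) (2 * g + 1 + Multiset.card s)]
    push_cast
    ring
  -- rewrite the correction term via inner sums at level g+1
  have step2 : ∑ s ∈ PF (g + 1),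
        ((2 * (g + 1) + Multiset.card s : ℕ) : ℚ)
          * (((m + 1).descFactorial (2 * g + 1 + Multiset.card s) : ℕ) : ℚ) / wq s
      = ∑ s ∈ PF (g + 1), ∑ j ∈ s.toFinset, Φ (s.erase j) := by
    refine Finset.sum_congr rfl fun s hs => ?_
    rw [hinner s (Or.inl hs)]
    have : 2 * s.sum = 2 * (g + 1) := by rw [(mem_PF.1 hs).2]
    rw [this]
  -- apply the split lemma, then evaluate at level g
  have step3 : ∑ s ∈ PF (g + 1), ∑ j ∈ s.toFinset, Φ (s.erase j)
      = ∑ t ∈ PF g, (Φ t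
          + ((2 * g + Multiset.card t : ℕ) : ℚ)
            * (((m + 1).descFactorial (2 * g + 1 + Multiset.card t) : ℕ) : ℚ) / wq t) := by
    rw [split_lemma g Φ, Finset.sum_add_distrib]
    congr 1
    refine Finset.sum_congr rfl fun t ht => ?_
    rw [hinner t (Or.inr ht)]
    have : 2 * t.sum = 2 * g := by rw [(mem_PF.1 ht).2]
    rw [this]
  -- final per-term simplification at level g
  have step4 : ∀ t ∈ PF g, Φ t
        + ((2 * g + Multiset.card t : ℕ) : ℚ)
          * (((m + 1).descFactorial (2 * g + 1 + Multiset.card t) : ℕ) : ℚ) / wq t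
      = (((m + 1) * m : ℕ) : ℚ)
          * (((m.descFactorial (2 * g + Multiset.card t) : ℕ) : ℚ) / wq t) := by
    intro t _
    rw [hΦ]
    simp only
    have hnum : (((m + 1).descFactorial (2 * g + 2 + Multiset.card t) : ℕ) : ℚ)
        + ((2 * g + Multiset.card t : ℕ) : ℚ)
          * (((m + 1).descFactorial (2 * g + 1 + Multiset.card t) : ℕ) : ℚ)
        = (((m + 1) * m : ℕ) : ℚ) * ((m.descFactorial (2 * g + Multiset.card t) : ℕ) : ℚ) := by
      have h1 : 2 * g + 2 + Multiset.card t = (2 * g + 1 + Multiset.card t) + 1 := by omega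
      have h2 : 2 * g + 1 + Multiset.card t = (2 * g + Multiset.card t) + 1 := by omega
      rw [h1, dF_succ_q (m + 1) (2 * g + 1 + Multiset.card t)]
      rw [h2, Nat.succ_descFactorial_succ]
      push_cast
      ring
    rw [← add_div, hnum, mul_div_assoc]
  rw [step1, step2, step3, Finset.sum_congr rfl step4, ← Finset.mul_sum, ← Fq]


open Equiv Equiv.Perm Finset

theorem Equiv.Perm.inv_apply_self {α : Type*} (f : Equiv.Perm α) (x : α) : f⁻¹ (f x) = x :=
  f.symm_apply_apply x

theorem Equiv.Perm.apply_inv_self {α : Type*} (f : Equiv.Perm α) (x : α) : f (f⁻¹ x) = x :=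
  f.apply_symm_apply x

section InsertLemmas

variable {α : Type*} [Fintype α] [DecidableEq α]

lemma swap_disjoint_of_fixed {e : Equiv.Perm α} {a b : α} (hab : a ≠ b)
    (ha : e a = a) (hb : e b = b) : Equiv.Perm.Disjoint (swap a b) e := by
  intro x
  by_cases hx : x = a ∨ x = b
  · rcases hx with rfl | rfl
    · exact Or.inr ha
    · exact Or.inr hb
  · push_neg at hx
    exact Or.inl (swap_apply_of_ne_of_ne hx.1 hx.2)

lemma insert_point_fix (e : Equiv.Perm α) {a b : α} (hab : a ≠ b)
    (ha : e a = a) (hb : e b = b) :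
    (swap a b * e).cycleType = 2 ::ₘ e.cycleType ∧
    ((swap a b * e).cycleOf a).support.card = 2 := by
  have hd := swap_disjoint_of_fixed hab ha hb
  have hsw : (swap a b).cycleType = {2} := by
    rw [(isCycle_swap hab).cycleType, support_swap hab]
    simp [Finset.card_insert_of_notMem, hab]
  constructor
  · rw [Equiv.Perm.Disjoint.cycleType_mul hd, hsw]
    rfl
  · have hmem : swap a b ∈ (swap a b * e).cycleFactorsFinset := by
      rw [Equiv.Perm.Disjoint.cycleFactorsFinset_mul_eq_union hd,
        (isCycle_swap hab).cycleFactorsFinset_eq_singleton]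
      exact Finset.mem_union_left _ (Finset.mem_singleton_self _)
    have hasup : a ∈ (swap a b).support := by
      rw [support_swap hab]; exact Finset.mem_insert_self _ _
    rw [← cycle_is_cycleOf hasup hmem, support_swap hab]
    simp [Finset.card_insert_of_notMem, hab]

lemma insert_point_move (e : Equiv.Perm α) {a b : α} (ha : e a = a) (hb : e b ≠ b) :
    ((e.cycleOf b).support.card ∈ e.cycleType) ∧
    (swap a b * e).cycleType
        = ((e.cycleOf b).support.card + 1) ::ₘ e.cycleType.erase ((e.cycleOf b).support.card) ∧
    ((swap a b * e).cycleOf a).support.card = (e.cycleOf b).support.card + 1 := by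
  classical
  have hab : a ≠ b := by rintro rfl; exact hb ha
  have hbsupp : b ∈ e.support := mem_support.2 hb
  set c : Equiv.Perm α := e.cycleOf b with hc
  set k : ℕ := c.support.card with hk
  have hcmem : c ∈ e.cycleFactorsFinset := cycleOf_mem_cycleFactorsFinset_iff.2 hbsupp
  have hccyc : c.IsCycle := isCycle_cycleOf e hb
  have hk2 : 2 ≤ k := hccyc.two_le_card_support
  -- the list of the cycle of b
  have h0 := toList_getElem_zero e b hbsupp
  set l : List α := e.toList b with hl
  have hlform : l.formPerm = c := formPerm_toList e b
  have hlnodup : l.Nodup := nodup_toList e b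
  have hllen : l.length = k := length_toList e b
  have hal : a ∉ l := by
    intro hal
    obtain ⟨⟨i, hi⟩, -⟩ := mem_toList_iff.1 hal
    have h1 : (e ^ i)⁻¹ ((e ^ i) b) = (e ^ i)⁻¹ a := congrArg _ hi
    rw [Equiv.Perm.inv_apply_self] at h1
    have h2 : (e ^ i)⁻¹ a = a := by
      rw [← zpow_neg]
      exact zpow_apply_eq_self_of_apply_eq_self ha (-i)
    rw [h2] at h1
    exact hb (h1 ▸ ha)
  have hlne : l ≠ [] := by
    intro h
    exact (toList_eq_nil_iff.1 h) hbsupp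
  have hhead : l.head hlne = b := by
    rw [← List.get_mk_zero (length_toList_pos_of_mem_support e b hbsupp)]
    exact h0
  have hxt : l = b :: l.tail := by
    conv_lhs => rw [← List.cons_head_tail hlne]
    rw [hhead]
  set t : List α := l.tail
  set L : List α := a :: l with hL
  have hLnodup : L.Nodup := List.nodup_cons.2 ⟨hal, hlnodup⟩
  have hLlen : L.length = k + 1 := by rw [hL, List.length_cons, hllen]
  have hLform : L.formPerm = swap a b * c := by
    rw [hL, hxt, List.formPerm_cons_cons, ← hxt, hlform]
  have hLcyc : L.formPerm.IsCycle := List.isCycle_formPerm hLnodup (by omega)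
  have hLsupp : L.formPerm.support = L.toFinset := by
    refine List.support_formPerm_of_nodup L hLnodup fun x hx => ?_
    have := congrArg List.length hx
    rw [hLlen] at this
    simp at this
    omega
  have hLcard : L.formPerm.support.card = k + 1 := by
    rw [hLsupp, List.card_toFinset, hLnodup.dedup, hLlen]
  set r : Equiv.Perm α := e * c⁻¹ with hr
  have hrc_disj : Equiv.Perm.Disjoint r c := disjoint_mul_inv_of_mem_cycleFactorsFinset hcmem
  have hfact_r : r.cycleFactorsFinset = e.cycleFactorsFinset \ {c} :=
    cycleFactorsFinset_mul_inv_mem_eq_sdiff hcmem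
  have hcomm : Commute c e := self_mem_cycle_factors_commute hcmem
  have hre : swap a b * e = L.formPerm * r := by
    have hmid : c * (e * c⁻¹) = e := by
      rw [← mul_assoc, hcomm.eq, mul_assoc, mul_inv_cancel, mul_one]
    rw [hLform, hr, mul_assoc, hmid]
  have hca : c a = a := by
    have : a ∉ c.support := fun hmem => (notMem_support.2 ha) (support_cycleOf_le e b hmem)
    exact notMem_support.1 this
  have hra : r a = a := by
    have hia : c⁻¹ a = a := by
      conv_lhs => rw [← hca]
      exact Equiv.Perm.inv_apply_self c a
    rw [hr, Equiv.Perm.mul_apply, hia, ha]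
  have hmem_l_supp_c : ∀ x ∈ l, x ∈ c.support := by
    intro x hx
    obtain ⟨hsc, hbs⟩ := mem_toList_iff.1 hx
    exact mem_support_cycleOf_iff.2 ⟨hsc, hbs⟩
  have hdisj2 : Equiv.Perm.Disjoint L.formPerm r := by
    intro x
    by_cases hx : x ∈ L
    · refine Or.inr ?_
      rcases List.mem_cons.1 hx with rfl | hx'
      · exact hra
      · have hxc : x ∈ c.support := hmem_l_supp_c x hx'
        rcases hrc_disj x with h | h
        · exact h
        · exact absurd h (mem_support.1 hxc)
    · exact Or.inl (List.formPerm_apply_of_notMem hx)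
  have hfactσ : (swap a b * e).cycleFactorsFinset
      = insert L.formPerm (e.cycleFactorsFinset.erase c) := by
    rw [hre, hdisj2.cycleFactorsFinset_mul_eq_union, hLcyc.cycleFactorsFinset_eq_singleton,
      hfact_r, Finset.sdiff_singleton_eq_erase, ← Finset.insert_eq]
  have haL : a ∈ L.formPerm.support := by
    rw [hLsupp]
    exact List.mem_toFinset.2 (List.mem_cons_self)
  have hCnotin : L.formPerm ∉ e.cycleFactorsFinset.erase c := by
    intro hmem
    have hmem' : L.formPerm ∈ r.cycleFactorsFinset := by
      rw [hfact_r, Finset.sdiff_singleton_eq_erase]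
      exact hmem
    have := mem_cycleFactorsFinset_support_le hmem' haL
    exact (mem_support.1 this) hra
  have hct_e : e.cycleType
      = k ::ₘ Multiset.map (Finset.card ∘ Equiv.Perm.support)
          (e.cycleFactorsFinset.erase c).val := by
    rw [cycleType_def]
    conv_lhs => rw [← Finset.insert_erase hcmem]
    rw [Finset.insert_val_of_notMem (Finset.notMem_erase _ _), Multiset.map_cons]
    rfl
  have hct_σ : (swap a b * e).cycleType
      = (k + 1) ::ₘ Multiset.map (Finset.card ∘ Equiv.Perm.support)
          (e.cycleFactorsFinset.erase c).val := by
    rw [cycleType_def, hfactσ, Finset.insert_val_of_notMem hCnotin, Multiset.map_cons,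
      Function.comp_apply, hLcard]
  refine ⟨?_, ?_, ?_⟩
  · rw [hct_e]; exact Multiset.mem_cons_self _ _
  · rw [hct_σ, hct_e, Multiset.erase_cons_head]
  · rw [← cycle_is_cycleOf haL (hfactσ ▸ Finset.mem_insert_self _ _), hLcard]

end InsertLemmas


section FinDict

open Equiv Equiv.Perm

lemma cycleOf_extendDomain {α β : Type*} [Fintype α] [DecidableEq α] [Fintype β]
    [DecidableEq β] {p : β → Prop} [DecidablePred p] (f : α ≃ Subtype p)
    (e : Equiv.Perm α) (x : α) :
    (e.extendDomain f).cycleOf ((f x : Subtype p) : β) = (e.cycleOf x).extendDomain f := by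
  have happ : ∀ (g : Equiv.Perm α) (y : α), (g.extendDomain f) ((f y : Subtype p) : β)
      = ((f (g y) : Subtype p) : β) := by
    intro g y
    have h1 := extendDomain_apply_subtype g f (f y).prop
    have hsymm : f.symm ⟨((f y : Subtype p) : β), (f y).prop⟩ = y := f.symm_apply_apply y
    rw [h1, hsymm]
  ext b
  by_cases hb : p b
  · set y : α := f.symm ⟨b, hb⟩ with hy
    have hby : ((f y : Subtype p) : β) = b := by
      rw [hy, Equiv.apply_symm_apply]
    rw [← hby]
    have sc : (e.extendDomain f).SameCycle ((f x : Subtype p) : β) ((f y : Subtype p) : β)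
        ↔ e.SameCycle x y := by
      constructor
      · rintro ⟨i, hi⟩
        rw [← extendDomain_zpow, happ (e ^ i) x] at hi
        exact ⟨i, f.injective (Subtype.coe_injective hi)⟩
      · rintro ⟨i, hi⟩
        exact ⟨i, by rw [← extendDomain_zpow, happ (e ^ i) x, hi]⟩
    by_cases hsc : e.SameCycle x y
    · rw [cycleOf_apply, if_pos (sc.2 hsc), happ e y, happ (e.cycleOf x) y,
        cycleOf_apply, if_pos hsc]
    · rw [cycleOf_apply, if_neg (fun h => hsc (sc.1 h)), happ (e.cycleOf x) y,
        cycleOf_apply, if_neg hsc]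
  · have hnsc : ¬ (e.extendDomain f).SameCycle ((f x : Subtype p) : β) b := by
      rintro ⟨i, hi⟩
      rw [← extendDomain_zpow, happ (e ^ i) x] at hi
      exact hb (hi ▸ (f ((e ^ i) x)).prop)
    rw [cycleOf_apply, if_neg hnsc, extendDomain_apply_not_subtype _ _ hb]

lemma fE_val {m : ℕ} (j : Fin m) :
    ((finSuccAboveEquiv (0 : Fin (m + 1)) j : {x : Fin (m + 1) // x ≠ 0}) : Fin (m + 1))
      = j.succ := by
  simp [finSuccAboveEquiv, Fin.zero_succAbove]

lemma E0_eq {m : ℕ} (e : Equiv.Perm (Fin m)) :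
    Equiv.Perm.decomposeFin.symm (0, e) = e.extendDomain (finSuccAboveEquiv 0) := by
  refine Equiv.ext fun x => ?_
  refine Fin.cases ?_ (fun i => ?_) x
  · rw [Equiv.Perm.decomposeFin_symm_apply_zero]
    exact (extendDomain_apply_not_subtype e (finSuccAboveEquiv (0 : Fin (m + 1)))
      (by simp : ¬ (0 : Fin (m + 1)) ≠ 0)).symm
  · have hsymm : (finSuccAboveEquiv (0 : Fin (m + 1))).symm ⟨i.succ, Fin.succ_ne_zero i⟩
        = i := by
      rw [Equiv.symm_apply_eq]
      exact Subtype.ext (fE_val i).symm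
    have hR : (e.extendDomain (finSuccAboveEquiv 0)) i.succ = (e i).succ := by
      have h2 := extendDomain_apply_subtype e (finSuccAboveEquiv (0 : Fin (m + 1)))
        (Fin.succ_ne_zero i)
      rw [hsymm] at h2
      rw [h2]
      exact fE_val (e i)
    rw [Equiv.Perm.decomposeFin_symm_apply_succ, swap_self, hR]
    exact Equiv.refl_apply _

lemma E0_cycleType {m : ℕ} (e : Equiv.Perm (Fin m)) :
    (Equiv.Perm.decomposeFin.symm (0, e)).cycleType = e.cycleType := by
  rw [E0_eq]
  exact cycleType_extendDomain _

lemma E0_apply_succ {m : ℕ} (e : Equiv.Perm (Fin m)) (i : Fin m) :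
    Equiv.Perm.decomposeFin.symm (0, e) i.succ = (e i).succ := by
  rw [Equiv.Perm.decomposeFin_symm_apply_succ, swap_self]
  rfl

lemma E0_cycleOf_card {m : ℕ} (e : Equiv.Perm (Fin m)) (i : Fin m) :
    ((Equiv.Perm.decomposeFin.symm (0, e)).cycleOf i.succ).support.card
      = (e.cycleOf i).support.card := by
  rw [E0_eq]
  have h := cycleOf_extendDomain (finSuccAboveEquiv (0 : Fin (m + 1))) e i
  rw [fE_val i] at h
  rw [h, card_support_extend_domain]

lemma decomposeFin_symm_eq_swap_mul {m : ℕ} (p : Fin (m + 1)) (e : Equiv.Perm (Fin m)) :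
    Equiv.Perm.decomposeFin.symm (p, e) = swap 0 p * Equiv.Perm.decomposeFin.symm (0, e) := by
  ext x
  refine Fin.cases ?_ (fun i => ?_) x
  · simp
  · rw [Equiv.Perm.decomposeFin_symm_apply_succ, Equiv.Perm.mul_apply, E0_apply_succ]

end FinDict

section Preds

open Equiv Equiv.Perm

variable {β : Type*} [Fintype β] [DecidableEq β]

lemma cycleOf_conj' (c e : Equiv.Perm β) (x : β) :
    (c * e * c⁻¹).cycleOf (c x) = c * e.cycleOf x * c⁻¹ := by
  have happ : ∀ (g : Equiv.Perm β) (b : β), (c * g * c⁻¹) b = c (g (c⁻¹ b)) := by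
    intro g b
    simp [Equiv.Perm.mul_apply]
  have hsc : ∀ b, (c * e * c⁻¹).SameCycle (c x) b ↔ e.SameCycle x (c⁻¹ b) := by
    intro b
    constructor
    · rintro ⟨i, hi⟩
      refine ⟨i, ?_⟩
      rw [conj_zpow, happ (e ^ i) (c x), Equiv.Perm.inv_apply_self] at hi
      rw [← hi, Equiv.Perm.inv_apply_self]
    · rintro ⟨i, hi⟩
      refine ⟨i, ?_⟩
      rw [conj_zpow, happ (e ^ i) (c x), Equiv.Perm.inv_apply_self, hi,
        Equiv.Perm.apply_inv_self]
  ext b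
  by_cases h : e.SameCycle x (c⁻¹ b)
  · rw [cycleOf_apply, if_pos ((hsc b).2 h), happ e b, happ (e.cycleOf x) b,
      cycleOf_apply, if_pos h]
  · rw [cycleOf_apply, if_neg (fun hh => h ((hsc b).1 hh)), happ (e.cycleOf x) b,
      cycleOf_apply, if_neg h, Equiv.Perm.apply_inv_self]

/-- all cycles oddும் the genus condition -/
def AgP (g : ℕ) (σ : Equiv.Perm β) : Prop :=
  (∀ l ∈ σ.cycleType, Odd l) ∧ σ.cycleType.sum = Multiset.card σ.cycleType + 2 * g

/-- all cycles odd except the (even) cycle of `x`, with genus condition -/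
def QgP (g : ℕ) (x : β) (σ : Equiv.Perm β) : Prop :=
  σ x ≠ x ∧ Even ((σ.cycleOf x).support.card) ∧
  (∀ l ∈ σ.cycleType.erase ((σ.cycleOf x).support.card), Odd l) ∧
  σ.cycleType.sum + 1 = Multiset.card σ.cycleType + 2 * g

lemma QgP_conj (g : ℕ) (c : Equiv.Perm β) (x : β) (e : Equiv.Perm β) :
    QgP g x e ↔ QgP g (c x) (c * e * c⁻¹) := by
  have h1 : (c * e * c⁻¹) (c x) = c (e x) := by
    simp [Equiv.Perm.mul_apply]
  have h2 : ((c * e * c⁻¹).cycleOf (c x)).support.card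
      = ((e.cycleOf x).support.card) := by
    rw [cycleOf_conj', Equiv.Perm.support_conj, Finset.card_map]
  have h3 : (c * e * c⁻¹).cycleType = e.cycleType := cycleType_conj
  unfold QgP
  rw [h1, h2, h3]
  constructor
  · rintro ⟨hA, hB, hC, hD⟩
    exact ⟨fun h => hA (c.injective h), hB, hC, hD⟩
  · rintro ⟨hA, hB, hC, hD⟩
    exact ⟨fun h => hA (by rw [h]), hB, hC, hD⟩

end Preds

section StepLemmas

open Equiv Equiv.Perm

lemma step_one_zero {m : ℕ} (g : ℕ) (e : Equiv.Perm (Fin (m + 1))) :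
    AgP g (Equiv.Perm.decomposeFin.symm (0, e)) ↔ AgP g e := by
  unfold AgP
  rw [E0_cycleType]

lemma step_one_succ {m : ℕ} (g : ℕ) (i : Fin (m + 1)) (e : Equiv.Perm (Fin (m + 1))) :
    AgP g (Equiv.Perm.decomposeFin.symm (i.succ, e)) ↔ QgP g i e := by
  rw [decomposeFin_symm_eq_swap_mul]
  set E := Equiv.Perm.decomposeFin.symm ((0 : Fin (m + 2)), e) with hE
  have hE0 : E 0 = 0 := Equiv.Perm.decomposeFin_symm_apply_zero 0 e
  have hEsucc : E i.succ = (e i).succ := E0_apply_succ e i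
  have hEct : E.cycleType = e.cycleType := E0_cycleType e
  by_cases hfix : e i = i
  · have hEfix : E i.succ = i.succ := by rw [hEsucc, hfix]
    obtain ⟨hct, -⟩ :=
      insert_point_fix E (Fin.succ_ne_zero i).symm hE0 hEfix
    constructor
    · rintro ⟨hodd, -⟩
      exfalso
      have h2 : (2 : ℕ) ∈ (swap (0 : Fin (m + 2)) i.succ * E).cycleType := by
        rw [hct]; exact Multiset.mem_cons_self _ _
      have := hodd 2 h2
      simp [Nat.odd_iff] at this
    · rintro ⟨hne, -⟩
      exact absurd hfix hne
  · have hEbne : E i.succ ≠ i.succ := by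
      rw [hEsucc]
      intro h
      exact hfix (Fin.succ_injective _ h)
    obtain ⟨hkmem, hct, hcard⟩ := insert_point_move E hE0 hEbne
    have hkval : (E.cycleOf i.succ).support.card = (e.cycleOf i).support.card :=
      E0_cycleOf_card e i
    set k := (e.cycleOf i).support.card with hkdef
    rw [hkval] at hkmem hct hcard
    rw [hEct] at hkmem hct
    have hkmem' : k ∈ e.cycleType := hkmem
    set M := e.cycleType.erase k with hM
    have hcons : e.cycleType = k ::ₘ M := (Multiset.cons_erase hkmem').symm
    constructor
    · rintro ⟨hodd, hsum⟩
      rw [hct] at hodd hsum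
      have hOk1 : Odd (k + 1) := hodd (k + 1) (Multiset.mem_cons_self _ _)
      have hOM : ∀ l ∈ M, Odd l := fun l hl => hodd l (Multiset.mem_cons_of_mem hl)
      refine ⟨hfix, ?_, ?_, ?_⟩
      · show Even k
        rcases Nat.even_or_odd k with h | h
        · exact h
        · exfalso
          rcases hOk1 with ⟨t, ht⟩
          rcases h with ⟨u, hu⟩
          omega
      · exact hOM
      · rw [Multiset.sum_cons, Multiset.card_cons] at hsum
        show e.cycleType.sum + 1 = Multiset.card e.cycleType + 2 * g
        rw [hcons, Multiset.sum_cons, Multiset.card_cons]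
        omega
    · rintro ⟨-, heven, hodd, hsum⟩
      have heven' : Even k := heven
      have hodd' : ∀ l ∈ M, Odd l := hodd
      have hsum' : (k ::ₘ M).sum + 1 = Multiset.card (k ::ₘ M) + 2 * g := by
        rw [← hcons]; exact hsum
      rw [Multiset.sum_cons, Multiset.card_cons] at hsum'
      constructor
      · intro l hl
        rw [hct] at hl
        rcases Multiset.mem_cons.1 hl with rfl | hl'
        · rcases heven' with ⟨t, ht⟩
          exact ⟨t, by omega⟩
        · exact hodd' l hl'
      · rw [hct, Multiset.sum_cons, Multiset.card_cons]
        omega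

lemma step_two_zero {m : ℕ} (g : ℕ) (f : Equiv.Perm (Fin m)) :
    ¬ QgP g (0 : Fin (m + 1)) (Equiv.Perm.decomposeFin.symm (0, f)) := by
  rintro ⟨hne, -⟩
  exact hne (Equiv.Perm.decomposeFin_symm_apply_zero 0 f)

lemma step_two_succ {m : ℕ} (g : ℕ) (j : Fin m) (f : Equiv.Perm (Fin m)) :
    QgP (g + 1) (0 : Fin (m + 1)) (Equiv.Perm.decomposeFin.symm (j.succ, f)) ↔ AgP g f := by
  rw [decomposeFin_symm_eq_swap_mul]
  set F := Equiv.Perm.decomposeFin.symm ((0 : Fin (m + 1)), f) with hF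
  have hF0 : F 0 = 0 := Equiv.Perm.decomposeFin_symm_apply_zero 0 f
  have hFsucc : F j.succ = (f j).succ := E0_apply_succ f j
  have hFct : F.cycleType = f.cycleType := E0_cycleType f
  have hσ0 : (swap (0 : Fin (m + 1)) j.succ * F) 0 = j.succ := by
    rw [Equiv.Perm.mul_apply, hF0, swap_apply_left]
  have hσ0ne : (swap (0 : Fin (m + 1)) j.succ * F) 0 ≠ 0 := by
    rw [hσ0]; exact Fin.succ_ne_zero j
  by_cases hfix : f j = j
  · have hFfix : F j.succ = j.succ := by rw [hFsucc, hfix]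
    obtain ⟨hct, hc2⟩ :=
      insert_point_fix F (Fin.succ_ne_zero j).symm hF0 hFfix
    have hcOf0 : ((swap (0 : Fin (m + 1)) j.succ * F).cycleOf 0).support.card = 2 := hc2
    rw [hFct] at hct
    unfold QgP AgP
    rw [hcOf0, hct, Multiset.erase_cons_head, Multiset.sum_cons, Multiset.card_cons]
    constructor
    · rintro ⟨-, -, hodd, hsum⟩
      exact ⟨hodd, by omega⟩
    · rintro ⟨hodd, hsum⟩
      exact ⟨hσ0ne, by decide, hodd, by omega⟩
  · have hFbne : F j.succ ≠ j.succ := by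
      rw [hFsucc]
      intro h
      exact hfix (Fin.succ_injective _ h)
    obtain ⟨hkmem, hct, hcard⟩ := insert_point_move F hF0 hFbne
    have hkval : (F.cycleOf j.succ).support.card = (f.cycleOf j).support.card :=
      E0_cycleOf_card f j
    set k := (f.cycleOf j).support.card with hkdef
    rw [hkval] at hkmem hct hcard
    rw [hFct] at hkmem hct
    have hkmem' : k ∈ f.cycleType := hkmem
    set M := f.cycleType.erase k with hM
    have hcons : f.cycleType = k ::ₘ M := (Multiset.cons_erase hkmem').symm
    have hk2 : 2 ≤ k := by
      have := Equiv.Perm.two_le_of_mem_cycleType hkmem'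
      omega
    unfold QgP AgP
    rw [hcard, hct, Multiset.erase_cons_head, Multiset.sum_cons, Multiset.card_cons]
    rw [hcons, Multiset.sum_cons, Multiset.card_cons]
    constructor
    · rintro ⟨-, heven, hodd, hsum⟩
      refine ⟨?_, by omega⟩
      intro l hl
      rcases Multiset.mem_cons.1 hl with rfl | hl'
      · rcases heven with ⟨t, ht⟩
        exact ⟨t - 1, by omega⟩
      · exact hodd l hl'
    · rintro ⟨hodd, hsum⟩
      refine ⟨hσ0ne, ?_, fun l hl => hodd l (Multiset.mem_cons_of_mem hl), by omega⟩
      have hOk : Odd k := hodd k (Multiset.mem_cons_self _ _)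
      rcases hOk with ⟨t, ht⟩
      exact ⟨t + 1, by omega⟩

end StepLemmas

section Counting

open Equiv Equiv.Perm

noncomputable def NA (m g : ℕ) : ℕ := Nat.card {σ : Equiv.Perm (Fin m) // AgP g σ}

lemma card_split {m : ℕ} (P : Equiv.Perm (Fin (m + 1)) → Prop) :
    Nat.card {σ : Equiv.Perm (Fin (m + 1)) // P σ}
      = ∑ p : Fin (m + 1),
          Nat.card {e : Equiv.Perm (Fin m) // P (Equiv.Perm.decomposeFin.symm (p, e))} := by
  classical
  have e1 : {σ : Equiv.Perm (Fin (m + 1)) // P σ}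
      ≃ {x : Fin (m + 1) × Equiv.Perm (Fin m) // P (Equiv.Perm.decomposeFin.symm x)} :=
    Equiv.subtypeEquiv Equiv.Perm.decomposeFin fun σ => by rw [Equiv.symm_apply_apply]
  have e2 : {x : Fin (m + 1) × Equiv.Perm (Fin m) // P (Equiv.Perm.decomposeFin.symm x)}
      ≃ Σ p : Fin (m + 1), {e : Equiv.Perm (Fin m) //
          P (Equiv.Perm.decomposeFin.symm (p, e))} :=
    Equiv.subtypeProdEquivSigmaSubtype
      (fun (p : Fin (m + 1)) (e : Equiv.Perm (Fin m)) =>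
        P (Equiv.Perm.decomposeFin.symm (p, e)))
  rw [Nat.card_congr (e1.trans e2), Nat.card_eq_fintype_card, Fintype.card_sigma]
  exact Finset.sum_congr rfl fun p _ => (Nat.card_eq_fintype_card).symm

lemma NQ_eq (m g : ℕ) (x : Fin (m + 1)) :
    Nat.card {e : Equiv.Perm (Fin (m + 1)) // QgP g x e}
      = Nat.card {e : Equiv.Perm (Fin (m + 1)) // QgP g (0 : Fin (m + 1)) e} := by
  refine Nat.card_congr (Equiv.subtypeEquiv (MulAut.conj (swap x 0)).toEquiv fun e => ?_)
  have h := QgP_conj g (swap x (0 : Fin (m + 1))) x e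
  rw [swap_apply_left] at h
  exact h

lemma NA_g_zero (m : ℕ) : NA m 0 = 1 := by
  classical
  have hiff : ∀ σ : Equiv.Perm (Fin m), AgP 0 σ ↔ σ = 1 := by
    intro σ
    unfold AgP
    constructor
    · rintro ⟨hodd, hsum⟩
      have h2 : ∀ l ∈ σ.cycleType, 2 ≤ l := fun l hl =>
        Equiv.Perm.two_le_of_mem_cycleType hl
      have hle : Multiset.card σ.cycleType • 2 ≤ σ.cycleType.sum :=
        Multiset.card_nsmul_le_sum h2
      rw [smul_eq_mul] at hle
      have hc0 : Multiset.card σ.cycleType = 0 := by omega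
      exact Equiv.Perm.card_cycleType_eq_zero.1 hc0
    · rintro rfl
      simp
  rw [NA, Nat.card_congr (Equiv.subtypeEquivRight hiff), Nat.card_eq_fintype_card]
  exact Fintype.card_subtype_eq 1

lemma NA_zero_small (g : ℕ) : NA 0 (g + 1) = 0 := by
  have h : ∀ σ : Equiv.Perm (Fin 0), ¬ AgP (g + 1) σ := by
    rintro σ ⟨-, hsum⟩
    have hσ : σ = 1 := Subsingleton.elim σ 1
    rw [hσ] at hsum
    simp [Equiv.Perm.cycleType_one] at hsum
  haveI : IsEmpty {σ : Equiv.Perm (Fin 0) // AgP (g + 1) σ} := ⟨fun x => h x.1 x.2⟩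
  exact Nat.card_of_isEmpty

lemma NA_one_small (g : ℕ) : NA 1 (g + 1) = 0 := by
  have h : ∀ σ : Equiv.Perm (Fin 1), ¬ AgP (g + 1) σ := by
    rintro σ ⟨-, hsum⟩
    have hσ : σ = 1 := Subsingleton.elim σ 1
    rw [hσ] at hsum
    simp [Equiv.Perm.cycleType_one] at hsum
  haveI : IsEmpty {σ : Equiv.Perm (Fin 1) // AgP (g + 1) σ} := ⟨fun x => h x.1 x.2⟩
  exact Nat.card_of_isEmpty

lemma NQ0_eq (m g : ℕ) :
    Nat.card {e : Equiv.Perm (Fin (m + 1)) // QgP (g + 1) (0 : Fin (m + 1)) e}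
      = m * NA m g := by
  rw [card_split (fun e => QgP (g + 1) (0 : Fin (m + 1)) e), Fin.sum_univ_succ]
  have h0 : Nat.card {f : Equiv.Perm (Fin m) //
      QgP (g + 1) (0 : Fin (m + 1)) (Equiv.Perm.decomposeFin.symm (0, f))} = 0 := by
    haveI : IsEmpty {f : Equiv.Perm (Fin m) //
        QgP (g + 1) (0 : Fin (m + 1)) (Equiv.Perm.decomposeFin.symm (0, f))} :=
      ⟨fun x => step_two_zero (g + 1) x.1 x.2⟩
    exact Nat.card_of_isEmpty
  rw [h0, zero_add]
  have hterm : ∀ j : Fin m, Nat.card {f : Equiv.Perm (Fin m) //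
      QgP (g + 1) (0 : Fin (m + 1)) (Equiv.Perm.decomposeFin.symm (j.succ, f))}
      = NA m g := fun j =>
    Nat.card_congr (Equiv.subtypeEquivRight fun f => step_two_succ g j f)
  rw [Finset.sum_congr rfl (fun j _ => hterm j), Finset.sum_const, Finset.card_univ,
    Fintype.card_fin, smul_eq_mul]

lemma NA_rec (m g : ℕ) :
    NA (m + 2) (g + 1) = NA (m + 1) (g + 1) + (m + 1) * (m * NA m g) := by
  rw [NA, card_split (fun σ => AgP (g + 1) σ), Fin.sum_univ_succ]
  congr 1
  · rw [Nat.card_congr (Equiv.subtypeEquivRight fun e => step_one_zero (g + 1) e)]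
    rfl
  · have hterm : ∀ i : Fin (m + 1), Nat.card {e : Equiv.Perm (Fin (m + 1)) //
        AgP (g + 1) (Equiv.Perm.decomposeFin.symm (i.succ, e))} = m * NA m g := by
      intro i
      rw [Nat.card_congr (Equiv.subtypeEquivRight fun e => step_one_succ (g + 1) i e),
        NQ_eq m (g + 1) i, NQ0_eq m g]
    rw [Finset.sum_congr rfl (fun i _ => hterm i), Finset.sum_const, Finset.card_univ,
      Fintype.card_fin, smul_eq_mul]

lemma Fq_eq_NA : ∀ m g : ℕ, Fq m g = (NA m g : ℚ) := by
  intro m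
  induction m using Nat.strong_induction_on with
  | _ m ih =>
    intro g
    rcases m with _ | m
    · rcases g with _ | g
      · rw [Fq_zero, NA_g_zero]; norm_num
      · rw [Fq_small 0 g (by omega), NA_zero_small]; norm_num
    rcases m with _ | m
    · rcases g with _ | g
      · rw [Fq_zero, NA_g_zero]; norm_num
      · rw [Fq_small 1 g (by omega), NA_one_small]; norm_num
    rcases g with _ | g
    · rw [Fq_zero, NA_g_zero]; norm_num
    · rw [show m + 1 + 1 = m + 2 from rfl, Fq_rec m g, NA_rec m g,
        ih (m + 1) (by omega) (g + 1), ih m (by omega) g]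
      push_cast
      ring

end Counting


lemma oddCyclePermCount_eq_NA (n g : ℕ) :
    oddCyclePermCount (n + 1) (g : ℤ) = NA (n + 1) g := by
  refine Nat.card_congr (Equiv.subtypeEquivRight fun σ => ?_)
  have hle : σ.cycleType.sum ≤ n + 1 := by
    rw [Equiv.Perm.sum_cycleType]
    have := Finset.card_le_univ σ.support
    rwa [Fintype.card_fin] at this
  unfold AgP cycleCount
  rw [Fintype.card_fin]
  constructor
  · rintro ⟨hodd, hsum⟩
    refine ⟨hodd, ?_⟩
    rw [Nat.cast_add, Nat.cast_sub hle] at hsum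
    omega
  · rintro ⟨hodd, hsum⟩
    refine ⟨hodd, ?_⟩
    rw [Nat.cast_add, Nat.cast_sub hle]
    omega

theorem stmt16' (n g : ℕ) (hn : 1 ≤ n) :
    ∑ p : Nat.Partition g,
      (((n + 1).descFactorial (2 * g + Multiset.card p.parts) : ℚ) /
        ∏ i ∈ p.parts.toFinset,
          (((p.parts.count i).factorial * (2 * i + 1) ^ (p.parts.count i) : ℕ) : ℚ))
    = (oddCyclePermCount (n + 1) (g : ℤ) : ℚ) := by
  have hL : ∑ p : Nat.Partition g,
      (((n + 1).descFactorial (2 * g + Multiset.card p.parts) : ℚ) /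
        ∏ i ∈ p.parts.toFinset,
          (((p.parts.count i).factorial * (2 * i + 1) ^ (p.parts.count i) : ℕ) : ℚ))
      = Fq (n + 1) g := by
    rw [Fq, ← sum_partition g
      (fun s => (((n + 1).descFactorial (2 * g + Multiset.card s) : ℕ) : ℚ) / wq s)]
    rfl
  rw [hL, Fq_eq_NA, oddCyclePermCount_eq_NA]

/-- The Lehman–Walsh sum over partitions of `g` equals `O(n+1,g)`:
`∑_{λ ⊢ g} (n+1)_{2g+ℓ(λ)} / ∏_i c_i!(2i+1)^{c_i} = O(n+1,g)`. -/
theorem stmt16 (n g : ℕ) (hn : 1 ≤ n) :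
    ∑ p : Nat.Partition g,
      (((n + 1).descFactorial (2 * g + Multiset.card p.parts) : ℚ) /
        ∏ i ∈ p.parts.toFinset,
          (((p.parts.count i).factorial * (2 * i + 1) ^ (p.parts.count i) : ℕ) : ℚ))
    = (oddCyclePermCount (n + 1) (g : ℤ) : ℚ) := by
  exact stmt16' n g hn
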